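/- arXiv:1402.5040 — 2 statements merged into one kernel-verified Lean document; each statement's English description precedes it below -/
import Mathlib

section
/- For every integer n ≥ 1 and every ρ > 0, the restriction of U_n^ρ to the space Π_n of polynomials of degree at most n is a linear bijection of Π_n onto itself; consequently, for every continuous f : [0,1] → ℝ there exists a unique polynomial p ∈ Π_n such that F_{n,k}^ρ(p) = F_{n,k}^ρ(f) for all k = 0,1,…,n. -/
open MeasureTheory

/-- Euler Beta function `B(a,b) = ∫₀¹ t^(a-1) (1-t)^(b-1) dt`. -/
noncomputable def betaFn (a b : ℝ) : ℝ :=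
  ∫ t in (0:ℝ)..1, t ^ (a - 1) * (1 - t) ^ (b - 1)

/-- The functionals `F_{n,k}^ρ`. -/
noncomputable def Ffun (n k : ℕ) (ρ : ℝ) (f : ℝ → ℝ) : ℝ :=
  if k = 0 then f 0
  else if k = n then f 1
  else (betaFn ((k : ℝ) * ρ) (((n : ℝ) - (k : ℝ)) * ρ))⁻¹ *
    ∫ t in (0:ℝ)..1, t ^ ((k : ℝ) * ρ - 1) * (1 - t) ^ (((n : ℝ) - (k : ℝ)) * ρ - 1) * f t

/-- Bernstein basis polynomial `p_{n,k}(x)`. -/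
noncomputable def bern (n k : ℕ) (x : ℝ) : ℝ :=
  (n.choose k : ℝ) * x ^ k * (1 - x) ^ (n - k)

/-- The operator `U_n^ρ`. -/
noncomputable def Uop (n : ℕ) (ρ : ℝ) (f : ℝ → ℝ) (x : ℝ) : ℝ :=
  ∑ k ∈ Finset.range (n + 1), Ffun n k ρ f * bern n k x

/-- Bernstein basis polynomial as an element of `ℝ[X]`. -/
noncomputable def bernPoly (n k : ℕ) : Polynomial ℝ :=
  (n.choose k : ℝ) • (Polynomial.X ^ k * (1 - Polynomial.X) ^ (n - k))

/-- The operator `U_n^ρ`, with values in `ℝ[X]`. -/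
noncomputable def Upoly (n : ℕ) (ρ : ℝ) (f : ℝ → ℝ) : Polynomial ℝ :=
  ∑ k ∈ Finset.range (n + 1), Ffun n k ρ f • bernPoly n k

/-!
On polynomials the functionals are moments of Beta distributions, and the Beta recurrence gives
`F_{n,k}^ρ(x^j) = (kρ)_j / (nρ)_j` with rising factorials `(a)_j`. Hence `F_{n,k}^ρ(p) = (T p)(k)`
for the linear map `T` sending `X^j` to `(ρX)_j / (nρ)_j`; it is injective because it preserves
degrees. If `p ∈ Π_n` and all `F_{n,k}^ρ(p)` vanish, then `T p ∈ Π_n` has the `n + 1` roots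
`0, …, n`, so `T p = 0` and `p = 0`. By linear independence of the Bernstein basis,
`U_n^ρ p = 0` forces all `F_{n,k}^ρ(p)` to vanish, so `U_n^ρ` is an injective, hence bijective,
endomorphism of the finite-dimensional space `Π_n`. The interpolant of `f` is the preimage of
`U_n^ρ f`.
-/

open Polynomial

lemma ofReal_betaFn {a b : ℝ} : ((betaFn a b : ℝ) : ℂ) = Complex.betaIntegral a b := by
  rw [betaFn, ← intervalIntegral.integral_ofReal, Complex.betaIntegral]
  refine intervalIntegral.integral_congr fun t ht => ?_
  rw [Set.uIcc_of_le zero_le_one] at ht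
  push_cast
  rw [Complex.ofReal_cpow ht.1, Complex.ofReal_cpow (sub_nonneg.2 ht.2)]
  push_cast
  ring

lemma betaFn_eq_Gamma_mul_Gamma_div {a b : ℝ} (ha : 0 < a) (hb : 0 < b) :
    betaFn a b = Real.Gamma a * Real.Gamma b / Real.Gamma (a + b) := by
  have h := Complex.Gamma_mul_Gamma_eq_betaIntegral (s := a) (t := b) (by simpa) (by simpa)
  rw [← ofReal_betaFn, ← Complex.ofReal_add] at h
  simp only [Complex.Gamma_ofReal] at h
  rw [eq_div_iff (Real.Gamma_pos_of_pos (add_pos ha hb)).ne']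
  exact_mod_cast (h.trans (mul_comm _ _)).symm

lemma betaFn_pos {a b : ℝ} (ha : 0 < a) (hb : 0 < b) : 0 < betaFn a b := by
  rw [betaFn_eq_Gamma_mul_Gamma_div ha hb]
  have := Real.Gamma_pos_of_pos ha
  have := Real.Gamma_pos_of_pos hb
  have := Real.Gamma_pos_of_pos (add_pos ha hb)
  positivity

lemma Real.Gamma_add_nat {a : ℝ} (ha : 0 < a) (j : ℕ) :
    Real.Gamma (a + j) = (ascPochhammer ℝ j).eval a * Real.Gamma a := by
  induction j with
  | zero => simp
  | succ j ih =>
    rw [Nat.cast_succ, ← add_assoc, Real.Gamma_add_one (by positivity), ih,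
      ascPochhammer_succ_eval]
    ring

lemma betaFn_add_nat {a b : ℝ} (ha : 0 < a) (hb : 0 < b) (j : ℕ) :
    betaFn (a + j) b =
      (ascPochhammer ℝ j).eval a / (ascPochhammer ℝ j).eval (a + b) * betaFn a b := by
  have hab := add_pos ha hb
  rw [betaFn_eq_Gamma_mul_Gamma_div (by positivity) hb, betaFn_eq_Gamma_mul_Gamma_div ha hb,
    add_right_comm, Real.Gamma_add_nat ha, Real.Gamma_add_nat hab]
  have := (Real.Gamma_pos_of_pos hab).ne'
  have := (ascPochhammer_pos j _ hab).ne'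
  field_simp

lemma intervalIntegrable_betaWeight_mul {a b : ℝ} (ha : 0 < a) (hb : 0 < b) {g : ℝ → ℝ}
    (hg : Continuous g) :
    IntervalIntegrable (fun t => t ^ (a - 1) * (1 - t) ^ (b - 1) * g t) volume 0 1 :=
  (intervalIntegral.intervalIntegrable_of_integral_ne_zero
    (betaFn_pos ha hb).ne').mul_continuousOn hg.continuousOn

lemma integral_betaWeight_mul_pow {a b : ℝ} (j : ℕ) :
    ∫ t in (0:ℝ)..1, t ^ (a - 1) * (1 - t) ^ (b - 1) * t ^ j = betaFn (a + j) b := by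
  refine intervalIntegral.integral_congr_ae (Filter.Eventually.of_forall fun t ht => ?_)
  rw [Set.uIoc_of_le zero_le_one] at ht
  rw [add_sub_right_comm, Real.rpow_add_natCast ht.1.ne']
  ring

section Moments

variable {n k : ℕ} {ρ : ℝ}

lemma betaParams_pos (hρ : 0 < ρ) (hk0 : k ≠ 0) (hkn : k < n) :
    0 < (k : ℝ) * ρ ∧ 0 < ((n : ℝ) - k) * ρ :=
  ⟨mul_pos (Nat.cast_pos.2 (Nat.pos_of_ne_zero hk0)) hρ,
    mul_pos (sub_pos.2 (Nat.cast_lt.2 hkn)) hρ⟩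

lemma Ffun_add (hρ : 0 < ρ) (hk : k ≤ n) {f g : ℝ → ℝ} (hf : Continuous f)
    (hg : Continuous g) : Ffun n k ρ (fun x => f x + g x) = Ffun n k ρ f + Ffun n k ρ g := by
  unfold Ffun
  split_ifs with hk0 hkn
  · rfl
  · rfl
  · obtain ⟨ha, hb⟩ := betaParams_pos hρ hk0 (lt_of_le_of_ne hk hkn)
    simp_rw [mul_add]
    rw [intervalIntegral.integral_add (intervalIntegrable_betaWeight_mul ha hb hf)
      (intervalIntegrable_betaWeight_mul ha hb hg), mul_add]

lemma Ffun_const_mul (c : ℝ) (f : ℝ → ℝ) :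
    Ffun n k ρ (fun x => c * f x) = c * Ffun n k ρ f := by
  unfold Ffun
  split_ifs
  · rfl
  · rfl
  · simp_rw [mul_left_comm _ c (f _)]
    rw [intervalIntegral.integral_const_mul, mul_left_comm]

lemma Ffun_pow (hρ : 0 < ρ) (hk : k ≤ n) (j : ℕ) :
    Ffun n k ρ (fun x => x ^ j) =
      (ascPochhammer ℝ j).eval (k * ρ) / (ascPochhammer ℝ j).eval (n * ρ) := by
  unfold Ffun
  split_ifs with hk0 hkn
  · subst hk0
    rcases j with _ | j <;> simp
  · subst hkn
    dsimp only
    have : 0 < (k : ℝ) * ρ := mul_pos (Nat.cast_pos.2 (Nat.pos_of_ne_zero hk0)) hρ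
    rw [one_pow, div_self (ascPochhammer_pos j _ this).ne']
  · obtain ⟨ha, hb⟩ := betaParams_pos hρ hk0 (lt_of_le_of_ne hk hkn)
    rw [integral_betaWeight_mul_pow, betaFn_add_nat ha hb, ← add_mul, add_sub_cancel,
      inv_mul_eq_iff_eq_mul₀ (betaFn_pos ha hb).ne', mul_comm]

end Moments

noncomputable def momentPoly (n : ℕ) (ρ : ℝ) (j : ℕ) : ℝ[X] :=
  C ((ascPochhammer ℝ j).eval (n * ρ))⁻¹ * (ascPochhammer ℝ j).comp (C ρ * X)

noncomputable def momentTransform (n : ℕ) (ρ : ℝ) : ℝ[X] →ₗ[ℝ] ℝ[X] :=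
  lsum fun j => LinearMap.toSpanSingleton ℝ ℝ[X] (momentPoly n ρ j)

section MomentTransform

variable {n : ℕ} {ρ : ℝ}

lemma eval_momentPoly (j : ℕ) (x : ℝ) :
    (momentPoly n ρ j).eval x =
      (ascPochhammer ℝ j).eval (x * ρ) / (ascPochhammer ℝ j).eval (n * ρ) := by
  rw [momentPoly, eval_mul, eval_C, eval_comp, eval_mul, eval_C, eval_X, mul_comm ρ,
    inv_mul_eq_div]

lemma natDegree_momentPoly_le (j : ℕ) : (momentPoly n ρ j).natDegree ≤ j :=
  calc (momentPoly n ρ j).natDegree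
      ≤ (ascPochhammer ℝ j).natDegree * (C ρ * X).natDegree :=
        (natDegree_C_mul_le _ _).trans natDegree_comp_le
    _ ≤ j * 1 := Nat.mul_le_mul (ascPochhammer_natDegree ℝ j).le
        ((natDegree_C_mul_le _ _).trans natDegree_X_le)
    _ = j := mul_one j

lemma degree_momentPoly (hn : n ≠ 0) (hρ : 0 < ρ) (j : ℕ) : (momentPoly n ρ j).degree = j := by
  have hnρ : 0 < (n : ℝ) * ρ := mul_pos (Nat.cast_pos.2 (Nat.pos_of_ne_zero hn)) hρ
  have hcomp : (ascPochhammer ℝ j).comp (C ρ * X) ≠ 0 := fun h =>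
    (ascPochhammer_pos j ρ hρ).ne' (by simpa using congrArg (eval 1) h)
  rw [momentPoly, degree_C_mul (inv_ne_zero (ascPochhammer_pos j _ hnρ).ne'),
    degree_eq_natDegree hcomp, natDegree_comp, ascPochhammer_natDegree,
    natDegree_C_mul_X _ hρ.ne', mul_one]

lemma momentTransform_monomial (j : ℕ) (a : ℝ) :
    momentTransform n ρ (monomial j a) = a • momentPoly n ρ j := by
  simp [momentTransform]

lemma momentTransform_eq_sum {m : ℕ} {p : ℝ[X]} (hp : p.natDegree < m) :
    momentTransform n ρ p = ∑ j ∈ Finset.range m, p.coeff j • momentPoly n ρ j :=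
  sum_over_range' _ (fun j => by simp) m hp

lemma natDegree_momentTransform_le {m : ℕ} {p : ℝ[X]} (hp : p.natDegree ≤ m) :
    (momentTransform n ρ p).natDegree ≤ m := by
  rw [momentTransform_eq_sum (Nat.lt_succ_of_le hp)]
  refine natDegree_sum_le_of_forall_le _ _ fun j hj => ?_
  exact (natDegree_smul_le _ _).trans
    ((natDegree_momentPoly_le j).trans (Nat.lt_succ_iff.1 (Finset.mem_range.1 hj)))

lemma momentTransform_injective (hn : n ≠ 0) (hρ : 0 < ρ) :
    Function.Injective (momentTransform n ρ) := by
  rw [injective_iff_map_eq_zero]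
  intro p hp
  rw [momentTransform_eq_sum (Nat.lt_succ_self p.natDegree)] at hp
  let S : Sequence ℝ := ⟨momentPoly n ρ, degree_momentPoly hn hρ⟩
  ext j
  rcases le_or_gt j p.natDegree with hj | hj
  · exact linearIndependent_iff'.1 S.linearIndependent _ _ hp j
      (Finset.mem_range.2 (Nat.lt_succ_of_le hj))
  · exact coeff_eq_zero_of_natDegree_lt hj

lemma Ffun_eval (hρ : 0 < ρ) {k : ℕ} (hk : k ≤ n) (p : ℝ[X]) :
    Ffun n k ρ (fun x => p.eval x) = (momentTransform n ρ p).eval (k : ℝ) := by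
  induction p using Polynomial.induction_on' with
  | add p q hp hq =>
    simp only [eval_add, map_add]
    rw [Ffun_add hρ hk p.continuous q.continuous, hp, hq]
  | monomial j a =>
    simp only [eval_monomial, momentTransform_monomial, eval_smul, eval_momentPoly, smul_eq_mul]
    rw [Ffun_const_mul, Ffun_pow hρ hk]

lemma eq_of_Ffun_eval_eq (hn : n ≠ 0) (hρ : 0 < ρ) {p q : ℝ[X]} (hp : p.natDegree ≤ n)
    (hq : q.natDegree ≤ n)
    (h : ∀ k ≤ n, Ffun n k ρ (fun x => p.eval x) = Ffun n k ρ (fun x => q.eval x)) : p = q := by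
  refine momentTransform_injective hn hρ (eq_of_natDegree_lt_card_of_eval_eq _ _
    (Nat.cast_injective.comp Fin.val_injective) (fun k : Fin (n + 1) => ?_) ?_)
  · have hk := Nat.lt_succ_iff.1 k.isLt
    simpa only [Function.comp_apply, ← Ffun_eval hρ hk] using h k hk
  · rw [Fintype.card_fin, Nat.lt_succ_iff]
    exact max_le (natDegree_momentTransform_le hp) (natDegree_momentTransform_le hq)

end MomentTransform

section Bernstein

variable {n : ℕ}

lemma bernPoly_coeff_of_lt {k m : ℕ} (h : m < k) : (bernPoly n k).coeff m = 0 := by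
  rw [bernPoly, coeff_smul, X_pow_mul, coeff_mul_X_pow', if_neg (not_le.2 h), smul_zero]

lemma bernPoly_coeff_self (k : ℕ) : (bernPoly n k).coeff k = n.choose k := by
  rw [bernPoly, coeff_smul, X_pow_mul, coeff_mul_X_pow', if_pos le_rfl, Nat.sub_self,
    coeff_zero_eq_eval_zero]
  simp

lemma natDegree_bernPoly_le {k : ℕ} (hk : k ≤ n) : (bernPoly n k).natDegree ≤ n :=
  calc (bernPoly n k).natDegree ≤ k + (n - k) * 1 := by
        refine (natDegree_smul_le _ _).trans (natDegree_mul_le.trans (add_le_add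
          (natDegree_X_pow_le k) (natDegree_pow_le_of_le _ ?_)))
        exact (natDegree_sub_le _ _).trans (by simp)
    _ = n := by omega

lemma linearIndependent_bernPoly (n : ℕ) :
    LinearIndependent ℝ fun k : Fin (n + 1) => bernPoly n k := by
  rw [Fintype.linearIndependent_iff]
  intro g hg i
  induction i using WellFoundedLT.induction with
  | _ i ih =>
    have hcoeff := congrArg (coeff · i) hg
    simp only [finsetSum_coeff, coeff_smul, smul_eq_mul, coeff_zero] at hcoeff
    rw [Finset.sum_eq_single i (fun l _ hli => ?_) (by simp), bernPoly_coeff_self] at hcoeff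
    · exact (mul_eq_zero.1 hcoeff).resolve_right
        (Nat.cast_ne_zero.2 (Nat.choose_pos (Nat.lt_succ_iff.1 i.isLt)).ne')
    · rcases lt_or_gt_of_ne hli with hlt | hgt
      · rw [ih l hlt, zero_mul]
      · rw [bernPoly_coeff_of_lt (Fin.lt_def.1 hgt), mul_zero]

end Bernstein

lemma natDegree_Upoly_le (n : ℕ) (ρ : ℝ) (f : ℝ → ℝ) : (Upoly n ρ f).natDegree ≤ n :=
  natDegree_sum_le_of_forall_le _ _ fun _ hk =>
    (natDegree_smul_le _ _).trans
      (natDegree_bernPoly_le (Nat.lt_succ_iff.1 (Finset.mem_range.1 hk)))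

lemma Upoly_eq_Upoly_iff {n : ℕ} {ρ : ℝ} {f g : ℝ → ℝ} :
    Upoly n ρ f = Upoly n ρ g ↔ ∀ k ≤ n, Ffun n k ρ f = Ffun n k ρ g := by
  refine ⟨fun h k hk => ?_, fun h => ?_⟩
  · have hsum : ∑ i : Fin (n + 1), (Ffun n i ρ f - Ffun n i ρ g) • bernPoly n i = 0 := by
      simp only [sub_smul, Finset.sum_sub_distrib]
      rw [← Finset.sum_range (fun i => Ffun n i ρ f • bernPoly n i),
        ← Finset.sum_range (fun i => Ffun n i ρ g • bernPoly n i), ← Upoly, ← Upoly, h, sub_self]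
    exact sub_eq_zero.1 (Fintype.linearIndependent_iff.1 (linearIndependent_bernPoly n) _ hsum
      ⟨k, Nat.lt_succ_of_le hk⟩)
  · exact Finset.sum_congr rfl fun k hk => by
      rw [h k (Nat.lt_succ_iff.1 (Finset.mem_range.1 hk))]

noncomputable def UpolyLinear (n : ℕ) (ρ : ℝ) : ℝ[X] →ₗ[ℝ] ℝ[X] :=
  ∑ k ∈ Finset.range (n + 1),
    ((leval (k : ℝ)).comp (momentTransform n ρ)).smulRight (bernPoly n k)

lemma UpolyLinear_apply {n : ℕ} {ρ : ℝ} (hρ : 0 < ρ) (p : ℝ[X]) :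
    UpolyLinear n ρ p = Upoly n ρ (fun x => p.eval x) := by
  rw [UpolyLinear, LinearMap.sum_apply, Upoly]
  exact Finset.sum_congr rfl fun k hk => by
    rw [LinearMap.smulRight_apply, LinearMap.comp_apply, leval_apply,
      Ffun_eval hρ (Nat.lt_succ_iff.1 (Finset.mem_range.1 hk))]

lemma mem_degreeLT_succ_iff_natDegree_le {R : Type*} [Semiring R] {n : ℕ} {p : R[X]} :
    p ∈ degreeLT R (n + 1) ↔ p.natDegree ≤ n := by
  rw [degreeLT_succ_eq_degreeLE, mem_degreeLE, natDegree_le_iff_degree_le]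

lemma bijOn_UpolyLinear {n : ℕ} (hn : n ≠ 0) {ρ : ℝ} (hρ : 0 < ρ) :
    Set.BijOn (UpolyLinear n ρ) (degreeLT ℝ (n + 1)) (degreeLT ℝ (n + 1)) := by
  have hmaps : ∀ p ∈ degreeLT ℝ (n + 1), UpolyLinear n ρ p ∈ degreeLT ℝ (n + 1) :=
    fun p _ => mem_degreeLT_succ_iff_natDegree_le.2
      (UpolyLinear_apply hρ p ▸ natDegree_Upoly_le n ρ _)
  have hinj : Set.InjOn (UpolyLinear n ρ) (degreeLT ℝ (n + 1)) := fun p hp q hq h =>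
    eq_of_Ffun_eval_eq hn hρ (mem_degreeLT_succ_iff_natDegree_le.1 hp)
      (mem_degreeLT_succ_iff_natDegree_le.1 hq)
      (Upoly_eq_Upoly_iff.1 (by rwa [UpolyLinear_apply hρ, UpolyLinear_apply hρ] at h))
  exact ⟨hmaps, hinj, (LinearMap.injOn_iff_surjOn hmaps).1 hinj⟩

/-- For `n ≥ 1` and `ρ > 0`, the restriction of `U_n^ρ` to `Π_n` is a bijection of
`Π_n` onto itself; consequently, for every continuous `f : [0,1] → ℝ` there is a
unique polynomial `p ∈ Π_n` with `F_{n,k}^ρ(p) = F_{n,k}^ρ(f)` for all `k = 0,…,n`. -/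
theorem Upoly_bijOn_and_existsUnique_interpolant (n : ℕ) (hn : 1 ≤ n) (ρ : ℝ) (hρ : 0 < ρ) :
    Set.BijOn (fun p : Polynomial ℝ => Upoly n ρ (fun x => p.eval x))
      {p : Polynomial ℝ | p.natDegree ≤ n} {p : Polynomial ℝ | p.natDegree ≤ n} ∧
    ∀ f : ℝ → ℝ, ContinuousOn f (Set.Icc 0 1) →
      ∃! p : Polynomial ℝ, p.natDegree ≤ n ∧
        ∀ k ≤ n, Ffun n k ρ (fun x => p.eval x) = Ffun n k ρ f := by
  have hdeg : (degreeLT ℝ (n + 1) : Set ℝ[X]) = {p | p.natDegree ≤ n} :=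
    Set.ext fun _ => mem_degreeLT_succ_iff_natDegree_le
  have hU : ⇑(UpolyLinear n ρ) = fun p : ℝ[X] => Upoly n ρ (fun x => p.eval x) :=
    funext (UpolyLinear_apply hρ)
  have hbij := bijOn_UpolyLinear (Nat.one_le_iff_ne_zero.1 hn) hρ
  rw [hdeg, hU] at hbij
  refine ⟨hbij, fun f _ => ?_⟩
  obtain ⟨p, hp, hpf⟩ := hbij.surjOn (natDegree_Upoly_le n ρ f)
  refine ⟨p, ⟨hp, Upoly_eq_Upoly_iff.1 hpf⟩, fun q ⟨hq, hqf⟩ => hbij.injOn hq hp ?_⟩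
  exact (Upoly_eq_Upoly_iff.2 hqf).trans hpf.symm
end

section
/- For every integer n ≥ 1 and every continuous function f : [0,1] → ℝ, lim_{ρ→∞} [F_{n,0}^ρ,…,F_{n,n}^ρ; f] = [0, 1/n, …, (n−1)/n, 1; f], the classical divided difference of f at the nodes 0, 1/n, …, (n−1)/n, 1 (that is, the coefficient of x^n in the Lagrange interpolation polynomial of f at these nodes). -/
open MeasureTheory

/-! For `0 < k < n`, `F_{n,k}^ρ f` is the mean of `f` under the Beta distribution with parameters
`kρ` and `(n - k)ρ`, whose mean is `k/n` and whose variance `(k/n)(1 - k/n)/(nρ + 1)` tends to `0`.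
Since `|f t - f x| ≤ ε + (2M/δ²)(t - x)²` on `[0,1]` for a continuous `f` (`M` a bound of `|f|`,
`δ` a modulus of uniform continuity for `ε`), this forces `F_{n,k}^ρ f → f(k/n)`.

Applied to the monomials, this says that the matrices `(F_{n,k}^ρ(x^j))_{k,j}` converge to the
Vandermonde matrix of the nodes `k/n`, which is invertible. The coefficient vector of `L_n^ρ f`
solves the linear system with these matrices and right-hand side `(F_{n,k}^ρ f)_k → (f(k/n))_k`,
so by continuity of matrix inversion it converges to the coefficient vector of the Lagrange
interpolation polynomial. -/

open Filter Set Topology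

section Concentration

variable {a b : ℝ}

lemma abs_sub_le_add_mul_sq {f : ℝ → ℝ} {s : Set ℝ} {x ε δ M : ℝ} (hx : x ∈ s) (hε : 0 ≤ ε)
    (hδ : 0 < δ) (hM : ∀ t ∈ s, |f t| ≤ M) (hfδ : ∀ t ∈ s, |t - x| < δ → |f t - f x| ≤ ε)
    {t : ℝ} (ht : t ∈ s) : |f t - f x| ≤ ε + 2 * M / δ ^ 2 * (t - x) ^ 2 := by
  have hC : 0 ≤ 2 * M / δ ^ 2 := by have := (abs_nonneg _).trans (hM x hx); positivity
  rcases lt_or_ge |t - x| δ with hclose | hfar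
  · nlinarith [hfδ t ht hclose, sq_nonneg (t - x)]
  · have hsq : δ ^ 2 ≤ (t - x) ^ 2 := by simpa using pow_le_pow_left₀ hδ.le hfar 2
    calc |f t - f x| ≤ |f t| + |f x| := abs_sub _ _
      _ ≤ 2 * M / δ ^ 2 * δ ^ 2 := by
        rw [div_mul_cancel₀ _ (by positivity)]
        linarith [hM t ht, hM x hx]
      _ ≤ ε + 2 * M / δ ^ 2 * (t - x) ^ 2 := by nlinarith

lemma abs_integral_mul_sub_le {w f g : ℝ → ℝ} {c : ℝ} (hab : a ≤ b)
    (hw_nonneg : ∀ t ∈ Icc a b, 0 ≤ w t) (hw_int : IntervalIntegrable w volume a b)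
    (hw_mass : ∫ t in a..b, w t = 1) (hf : ContinuousOn f (Icc a b))
    (hg : ContinuousOn g (Icc a b)) (hfg : ∀ t ∈ Icc a b, |f t - c| ≤ g t) :
    |(∫ t in a..b, w t * f t) - c| ≤ ∫ t in a..b, w t * g t := by
  have hwf := hw_int.mul_continuousOn (f := w) (g := f) (by rwa [uIcc_of_le hab])
  have hwg := hw_int.mul_continuousOn (f := w) (g := g) (by rwa [uIcc_of_le hab])
  have hsub : (∫ t in a..b, w t * f t) - c = ∫ t in a..b, w t * (f t - c) := by
    simp_rw [mul_sub]
    rw [intervalIntegral.integral_sub hwf (hw_int.mul_const c),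
      intervalIntegral.integral_mul_const, hw_mass, one_mul]
  rw [hsub, ← Real.norm_eq_abs]
  refine intervalIntegral.norm_integral_le_of_norm_le hab (ae_of_all _ fun t ht => ?_) hwg
  have ht : t ∈ Icc a b := Ioc_subset_Icc_self ht
  rw [Real.norm_eq_abs, abs_mul, abs_of_nonneg (hw_nonneg t ht)]
  exact mul_le_mul_of_nonneg_left (hfg t ht) (hw_nonneg t ht)

theorem tendsto_integral_mul_of_tendsto_integral_mul_sq {ι : Type*} {l : Filter ι}
    {w : ι → ℝ → ℝ} {f : ℝ → ℝ} {x : ℝ} (hab : a ≤ b) (hx : x ∈ Icc a b)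
    (hf : ContinuousOn f (Icc a b))
    (hw : ∀ᶠ i in l, (∀ t ∈ Icc a b, 0 ≤ w i t) ∧ IntervalIntegrable (w i) volume a b ∧
      ∫ t in a..b, w i t = 1)
    (hvar : Tendsto (fun i => ∫ t in a..b, w i t * (t - x) ^ 2) l (𝓝 0)) :
    Tendsto (fun i => ∫ t in a..b, w i t * f t) l (𝓝 (f x)) := by
  obtain ⟨M, hM⟩ := isCompact_Icc.exists_bound_of_continuousOn hf
  rw [Metric.tendsto_nhds]
  intro ε hε
  obtain ⟨δ, hδ, hfδ⟩ := Metric.uniformContinuousOn_iff.1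
    (isCompact_Icc.uniformContinuousOn_of_continuous hf) (ε / 2) (half_pos hε)
  set C := 2 * M / δ ^ 2
  have hCvar : ∀ᶠ i in l, C * ∫ t in a..b, w i t * (t - x) ^ 2 < ε / 2 := by
    refine (hvar.const_mul C).eventually (gt_mem_nhds ?_)
    simpa using half_pos hε
  filter_upwards [hw, hCvar] with i ⟨hw_nonneg, hw_int, hw_mass⟩ hi
  have hsq_int : IntervalIntegrable (fun t => w i t * (t - x) ^ 2) volume a b :=
    hw_int.mul_continuousOn (by fun_prop)
  have hbound := abs_integral_mul_sub_le hab hw_nonneg hw_int hw_mass hf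
    (g := fun t => ε / 2 + C * (t - x) ^ 2) (by fun_prop) fun t ht =>
      abs_sub_le_add_mul_sq hx (half_pos hε).le hδ hM
        (fun t ht h => (hfδ t ht x hx h).le) ht
  rw [Real.dist_eq]
  calc |(∫ t in a..b, w i t * f t) - f x|
      ≤ ∫ t in a..b, w i t * (ε / 2 + C * (t - x) ^ 2) := hbound
    _ = ε / 2 + C * ∫ t in a..b, w i t * (t - x) ^ 2 := by
      simp_rw [mul_add, mul_left_comm (w i _) C]
      rw [intervalIntegral.integral_add (hw_int.mul_const _) (hsq_int.const_mul C),
        intervalIntegral.integral_mul_const, intervalIntegral.integral_const_mul, hw_mass, one_mul]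
    _ < ε := by linarith

end Concentration

lemma betaIntegral_ofReal (α β : ℝ) : Complex.betaIntegral α β = betaFn α β := by
  rw [betaFn, ← intervalIntegral.integral_ofReal]
  refine intervalIntegral.integral_congr fun t ht => ?_
  rw [uIcc_of_le zero_le_one] at ht
  simp only [Complex.ofReal_mul, Complex.ofReal_cpow ht.1,
    Complex.ofReal_cpow (sub_nonneg.2 ht.2), Complex.ofReal_sub, Complex.ofReal_one]

section Beta

variable {α β : ℝ}

lemma betaFn_eq_beta (hα : 0 < α) (hβ : 0 < β) : betaFn α β = ProbabilityTheory.beta α β := by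
  rw [ProbabilityTheory.beta_eq_betaIntegralReal α β hα hβ, betaIntegral_ofReal,
    Complex.ofReal_re]

lemma betaFn_pos_s5 (hα : 0 < α) (hβ : 0 < β) : 0 < betaFn α β :=
  betaFn_eq_beta hα hβ ▸ ProbabilityTheory.beta_pos hα hβ

lemma betaFn_add_one (hα : 0 < α) (hβ : 0 < β) :
    betaFn (α + 1) β = α / (α + β) * betaFn α β := by
  have hαβ : 0 < α + β := add_pos hα hβ
  rw [betaFn_eq_beta (by linarith) hβ, betaFn_eq_beta hα hβ, ProbabilityTheory.beta,
    ProbabilityTheory.beta, add_right_comm, Real.Gamma_add_one hα.ne',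
    Real.Gamma_add_one hαβ.ne']
  have := (Real.Gamma_pos_of_pos hαβ).ne'
  field_simp

noncomputable def betaDensity (α β t : ℝ) : ℝ :=
  (betaFn α β)⁻¹ * (t ^ (α - 1) * (1 - t) ^ (β - 1))

lemma betaDensity_nonneg {t : ℝ} (ht : t ∈ Icc (0 : ℝ) 1) : 0 ≤ betaDensity α β t := by
  have hkernel : ∀ t ∈ Icc (0 : ℝ) 1, 0 ≤ t ^ (α - 1) * (1 - t) ^ (β - 1) := fun t ht =>
    mul_nonneg (Real.rpow_nonneg ht.1 _) (Real.rpow_nonneg (sub_nonneg.2 ht.2) _)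
  exact mul_nonneg (inv_nonneg.2 (intervalIntegral.integral_nonneg zero_le_one hkernel))
    (hkernel t ht)

lemma intervalIntegrable_betaDensity (hα : 0 < α) (hβ : 0 < β) :
    IntervalIntegrable (betaDensity α β) volume 0 1 :=
  (intervalIntegral.intervalIntegrable_of_integral_ne_zero (betaFn_pos_s5 hα hβ).ne').const_mul _

lemma integral_betaDensity (hα : 0 < α) (hβ : 0 < β) :
    ∫ t in (0 : ℝ)..1, betaDensity α β t = 1 := by
  simp only [betaDensity, intervalIntegral.integral_const_mul]
  exact inv_mul_cancel₀ (betaFn_pos_s5 hα hβ).ne'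

lemma betaDensity_mul_self (hα : 0 < α) (hβ : 0 < β) {t : ℝ} (ht : 0 ≤ t) :
    betaDensity α β t * t = α / (α + β) * betaDensity (α + 1) β t := by
  have hB := (betaFn_pos_s5 hα hβ).ne'
  have hαβ : α + β ≠ 0 := (add_pos hα hβ).ne'
  have hpow : t ^ (α + 1 - 1) = t ^ (α - 1) * t := by
    rw [show α + 1 - 1 = (α - 1) + 1 by ring, Real.rpow_add' ht (by linarith), Real.rpow_one]
  rw [betaDensity, betaDensity, betaFn_add_one hα hβ, hpow]
  field_simp

lemma integral_betaDensity_mul_self (hα : 0 < α) (hβ : 0 < β) :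
    ∫ t in (0 : ℝ)..1, betaDensity α β t * t = α / (α + β) := by
  rw [intervalIntegral.integral_congr fun t ht => betaDensity_mul_self hα hβ
      (t := t) (by rw [uIcc_of_le zero_le_one] at ht; exact ht.1),
    intervalIntegral.integral_const_mul, integral_betaDensity (by linarith) hβ, mul_one]

lemma integral_betaDensity_mul_sq (hα : 0 < α) (hβ : 0 < β) :
    ∫ t in (0 : ℝ)..1, betaDensity α β t * t ^ 2 = α / (α + β) * ((α + 1) / (α + β + 1)) := by
  have hcongr : EqOn (fun t => betaDensity α β t * t ^ 2)
      (fun t => α / (α + β) * (betaDensity (α + 1) β t * t)) (uIcc 0 1) := fun t ht => by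
    rw [uIcc_of_le zero_le_one] at ht
    simp only [sq, ← mul_assoc, betaDensity_mul_self hα hβ ht.1]
  rw [intervalIntegral.integral_congr hcongr, intervalIntegral.integral_const_mul,
    integral_betaDensity_mul_self (by linarith) hβ, add_right_comm]

lemma integral_betaDensity_mul_sub_mean_sq (hα : 0 < α) (hβ : 0 < β) :
    ∫ t in (0 : ℝ)..1, betaDensity α β t * (t - α / (α + β)) ^ 2 =
      α / (α + β) * (1 - α / (α + β)) / (α + β + 1) := by
  set m := α / (α + β)
  have hw := intervalIntegrable_betaDensity hα hβ
  have hw1 : IntervalIntegrable (fun t => betaDensity α β t * t) volume 0 1 :=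
    hw.mul_continuousOn (by fun_prop)
  have hw2 : IntervalIntegrable (fun t => betaDensity α β t * t ^ 2) volume 0 1 :=
    hw.mul_continuousOn (by fun_prop)
  have hexpand : ∀ t, betaDensity α β t * (t - m) ^ 2 =
      betaDensity α β t * t ^ 2 - 2 * m * (betaDensity α β t * t) + m ^ 2 * betaDensity α β t :=
    fun t => by ring
  simp_rw [hexpand]
  rw [intervalIntegral.integral_add (hw2.sub (hw1.const_mul _)) (hw.const_mul _),
    intervalIntegral.integral_sub hw2 (hw1.const_mul _), intervalIntegral.integral_const_mul,
    intervalIntegral.integral_const_mul, integral_betaDensity_mul_sq hα hβ,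
    integral_betaDensity_mul_self hα hβ, integral_betaDensity hα hβ]
  have hαβ : 0 < α + β := add_pos hα hβ
  simp only [m]
  field_simp
  ring

end Beta

theorem tendsto_integral_betaDensity_mul {ι : Type*} {l : Filter ι} {α β : ι → ℝ} {x : ℝ}
    {f : ℝ → ℝ} (hx : x ∈ Icc (0 : ℝ) 1) (hf : ContinuousOn f (Icc 0 1))
    (hαβ : ∀ᶠ i in l, 0 < α i ∧ 0 < β i ∧ α i / (α i + β i) = x)
    (hsum : Tendsto (fun i => α i + β i) l atTop) :
    Tendsto (fun i => ∫ t in (0 : ℝ)..1, betaDensity (α i) (β i) t * f t) l (𝓝 (f x)) := by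
  refine tendsto_integral_mul_of_tendsto_integral_mul_sq zero_le_one hx hf
    (hαβ.mono fun i ⟨hα, hβ, _⟩ => ⟨fun t ht => betaDensity_nonneg ht,
      intervalIntegrable_betaDensity hα hβ, integral_betaDensity hα hβ⟩) ?_
  have hvar : ∀ᶠ i in l, x * (1 - x) / (α i + β i + 1) =
      ∫ t in (0 : ℝ)..1, betaDensity (α i) (β i) t * (t - x) ^ 2 :=
    hαβ.mono fun i ⟨hα, hβ, hmean⟩ => by
      rw [← hmean, integral_betaDensity_mul_sub_mean_sq hα hβ]
  exact (tendsto_const_nhds.div_atTop (tendsto_atTop_add_const_right _ 1 hsum)).congr' hvar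

section Ffun

variable {n k : ℕ} {ρ : ℝ}

lemma Ffun_of_pos_of_lt (hk : 0 < k) (hkn : k < n) (f : ℝ → ℝ) :
    Ffun n k ρ f = ∫ t in (0 : ℝ)..1, betaDensity (k * ρ) ((n - k) * ρ) t * f t := by
  simp only [Ffun, if_neg hk.ne', if_neg hkn.ne, betaDensity, mul_assoc,
    intervalIntegral.integral_const_mul]

theorem tendsto_Ffun (hk : k ≤ n) {f : ℝ → ℝ} (hf : ContinuousOn f (Icc 0 1)) :
    Tendsto (fun ρ => Ffun n k ρ f) atTop (𝓝 (f (k / n))) := by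
  obtain rfl | hk0 := k.eq_zero_or_pos
  · simp [Ffun]
  obtain rfl | hkn := hk.eq_or_lt
  · simp [Ffun, hk0.ne']
  have hn : (0 : ℝ) < n := by exact_mod_cast hk0.trans hkn
  have hx : (k / n : ℝ) ∈ Icc (0 : ℝ) 1 :=
    ⟨by positivity, div_le_one_of_le₀ (by exact_mod_cast hk) hn.le⟩
  have hαβ : ∀ᶠ ρ : ℝ in atTop,
      0 < k * ρ ∧ 0 < (n - k) * ρ ∧ k * ρ / (k * ρ + (n - k) * ρ) = k / n := by
    filter_upwards [eventually_gt_atTop 0] with ρ hρ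
    have : (k : ℝ) < n := by exact_mod_cast hkn
    refine ⟨by positivity, mul_pos (by linarith) hρ, ?_⟩
    rw [← add_mul, add_sub_cancel, mul_div_mul_right _ _ hρ.ne']
  have hsum : Tendsto (fun ρ : ℝ => k * ρ + (n - k) * ρ) atTop atTop := by
    simpa [← add_mul] using tendsto_id.const_mul_atTop hn
  exact (tendsto_integral_betaDensity_mul hx hf hαβ hsum).congr fun ρ =>
    (Ffun_of_pos_of_lt hk0 hkn f).symm

lemma Ffun_eval_eq_sum (hρ : 0 < ρ) (hk : k ≤ n) (p : Polynomial ℝ) {N : ℕ}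
    (hp : p.natDegree < N) :
    Ffun n k ρ (fun x => p.eval x) = ∑ j ∈ Finset.range N, p.coeff j * Ffun n k ρ (· ^ j) := by
  simp_rw [Polynomial.eval_eq_sum_range' hp]
  obtain rfl | hk0 := k.eq_zero_or_pos
  · simp [Ffun]
  obtain rfl | hkn := hk.eq_or_lt
  · simp [Ffun, hk0.ne']
  have hw := intervalIntegrable_betaDensity (α := k * ρ) (β := (n - k) * ρ) (by positivity)
    (mul_pos (sub_pos.2 (by exact_mod_cast hkn)) hρ)
  simp_rw [Ffun_of_pos_of_lt hk0 hkn, Finset.mul_sum]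
  rw [intervalIntegral.integral_finsetSum fun j _ => hw.mul_continuousOn (by fun_prop)]
  refine Finset.sum_congr rfl fun j _ => ?_
  simp_rw [mul_left_comm _ (p.coeff j), intervalIntegral.integral_const_mul]

end Ffun

lemma injective_natCast_div (n : ℕ) : Function.Injective fun k : Fin (n + 1) => (k : ℝ) / n := by
  intro i j h
  obtain rfl | hn := eq_or_ne n 0
  · exact Subsingleton.elim (α := Fin 1) i j
  · exact Fin.ext (by exact_mod_cast (div_left_inj' (Nat.cast_ne_zero.2 hn : (n : ℝ) ≠ 0)).1 h)

open scoped Matrix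

lemma Matrix.vandermonde_mulVec_coeff {R : Type*} [CommRing R] {n : ℕ} (v : Fin (n + 1) → R)
    {p : Polynomial R} (hp : p.natDegree ≤ n) :
    vandermonde v *ᵥ (fun j => p.coeff j) = fun k => p.eval (v k) := by
  ext k
  rw [Polynomial.eval_eq_sum_range' (Nat.lt_succ_of_le hp), ← Fin.sum_univ_eq_sum_range]
  simp [mulVec, dotProduct, mul_comm]

theorem Matrix.tendsto_of_tendsto_mulVec {ι K γ : Type*} [Fintype ι] [DecidableEq ι] [Field K]
    [TopologicalSpace K] [IsTopologicalDivisionRing K] [T1Space K] {l : Filter γ}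
    {A : γ → Matrix ι ι K} {A₀ : Matrix ι ι K} {x : γ → ι → K} {x₀ : ι → K}
    (hA : Tendsto A l (𝓝 A₀)) (hA₀ : A₀.det ≠ 0)
    (hAx : Tendsto (fun i => A i *ᵥ x i) l (𝓝 (A₀ *ᵥ x₀))) : Tendsto x l (𝓝 x₀) := by
  have hdet : Tendsto (fun i => (A i).det) l (𝓝 A₀.det) :=
    (continuous_id.matrix_det.tendsto A₀).comp hA
  have hinv : Tendsto (fun i => (A i)⁻¹) l (𝓝 A₀⁻¹) := by
    refine ((continuousAt_matrix_inv A₀ ?_).tendsto).comp hA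
    simpa only [Ring.inverse_eq_inv'] using continuousAt_inv₀ hA₀
  have hlim := ((continuous_fst.matrix_mulVec continuous_snd).tendsto _).comp
    (hinv.prodMk_nhds hAx)
  rw [Function.comp_def, mulVec_mulVec, nonsing_inv_mul _ hA₀.isUnit, one_mulVec] at hlim
  refine hlim.congr' ?_
  filter_upwards [hdet.eventually_ne hA₀] with i hi
  rw [mulVec_mulVec, nonsing_inv_mul _ hi.isUnit, one_mulVec]

theorem tendsto_coeff_dividedDifference_general (n : ℕ)
    (f : ℝ → ℝ) (hf : ContinuousOn f (Set.Icc 0 1))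
    (L : ℝ → Polynomial ℝ)
    (hLdeg : ∀ ρ : ℝ, 0 < ρ → (L ρ).natDegree ≤ n)
    (hL : ∀ ρ : ℝ, 0 < ρ → ∀ k ≤ n,
      Ffun n k ρ (fun x => (L ρ).eval x) = Ffun n k ρ f)
    (Lg : Polynomial ℝ) (hLgdeg : Lg.natDegree ≤ n)
    (hLg : ∀ k ≤ n, Lg.eval ((k : ℝ) / (n : ℝ)) = f ((k : ℝ) / (n : ℝ))) :
    Filter.Tendsto (fun ρ : ℝ => (L ρ).coeff n) Filter.atTop (nhds (Lg.coeff n)) := by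
  let nodes : Fin (n + 1) → ℝ := fun k => (k : ℝ) / n
  let A : ℝ → Matrix (Fin (n + 1)) (Fin (n + 1)) ℝ := fun ρ =>
    Matrix.of fun k j => Ffun n k ρ (· ^ (j : ℕ))
  have hA : Tendsto A atTop (𝓝 (Matrix.vandermonde nodes)) :=
    tendsto_pi_nhds.2 fun k => tendsto_pi_nhds.2 fun j =>
      tendsto_Ffun k.is_le (continuous_pow j).continuousOn
  have hAL : ∀ᶠ ρ in atTop,
      A ρ *ᵥ (fun j => (L ρ).coeff j) = fun k : Fin (n + 1) => Ffun n k ρ f := by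
    filter_upwards [eventually_gt_atTop 0] with ρ hρ
    ext k
    rw [← hL ρ hρ k k.is_le, Ffun_eval_eq_sum hρ k.is_le _ (Nat.lt_succ_of_le (hLdeg ρ hρ)),
      ← Fin.sum_univ_eq_sum_range]
    simp [A, Matrix.mulVec, dotProduct, mul_comm]
  have hVLg : Matrix.vandermonde nodes *ᵥ (fun j => Lg.coeff j) = fun k => f (nodes k) := by
    rw [Matrix.vandermonde_mulVec_coeff nodes hLgdeg]
    exact funext fun k => hLg k k.is_le
  have hALlim : Tendsto (fun ρ => A ρ *ᵥ (fun j => (L ρ).coeff j)) atTop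
      (𝓝 (Matrix.vandermonde nodes *ᵥ (fun j => Lg.coeff j))) := by
    rw [hVLg]
    exact (tendsto_pi_nhds.2 fun k => tendsto_Ffun k.is_le hf).congr' (hAL.mono fun _ h => h.symm)
  have hcoeff := Matrix.tendsto_of_tendsto_mulVec hA
    (Matrix.det_vandermonde_ne_zero_iff.2 (injective_natCast_div n)) hALlim
  exact tendsto_pi_nhds.1 hcoeff (Fin.last n)

/-- For every `n ≥ 1` and continuous `f : [0,1] → ℝ`, the generalized divided
difference `[F_{n,0}^ρ,…,F_{n,n}^ρ; f]` (the coefficient of `x^n` in `L_n^ρ f`)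
converges, as `ρ → ∞`, to the classical divided difference
`[0, 1/n, …, 1; f]` (the coefficient of `x^n` in the Lagrange polynomial of `f`
at the nodes `k/n`). -/
theorem tendsto_coeff_dividedDifference (n : ℕ) (hn : 1 ≤ n)
    (f : ℝ → ℝ) (hf : ContinuousOn f (Set.Icc 0 1))
    (L : ℝ → Polynomial ℝ)
    (hLdeg : ∀ ρ : ℝ, 0 < ρ → (L ρ).natDegree ≤ n)
    (hL : ∀ ρ : ℝ, 0 < ρ → ∀ k ≤ n,
      Ffun n k ρ (fun x => (L ρ).eval x) = Ffun n k ρ f)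
    (Lg : Polynomial ℝ) (hLgdeg : Lg.natDegree ≤ n)
    (hLg : ∀ k ≤ n, Lg.eval ((k : ℝ) / (n : ℝ)) = f ((k : ℝ) / (n : ℝ))) :
    Filter.Tendsto (fun ρ : ℝ => (L ρ).coeff n) Filter.atTop (nhds (Lg.coeff n)) :=
  tendsto_coeff_dividedDifference_general n f hf L hLdeg hL Lg hLgdeg hLg
end
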